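/- Let (R, m) be a Cohen-Macaulay local ring which is not Gorenstein and whose canonical ideal C is equimultiple. Then the canonical index ρ(R) = red(C) is not equal to 1. -/

import Mathlib

open IsLocalRing

/-- `Hom(I, I) = R`, expressed denominator-freely in the total ring of fractions:
whenever `(x/y)·I ⊆ I` for a regular denominator `y`, the fraction `x/y` lies in `R`. -/
def IsClosedIdeal (R : Type*) [CommRing R] (I : Ideal R) : Prop :=
  ∀ x : R, ∀ y ∈ nonZeroDivisors R, Ideal.span {x} * I ≤ Ideal.span {y} * I → x ∈ Ideal.span {y}

/-! If `C² = aC` with `a ∈ C` regular, then every `x ∈ C` gives `(x/a)·C ⊆ C`, so `x/a ∈ R`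
by `Hom(C, C) = R`; hence `C = (a)`. Regularity of `a` comes for free: `a` divides `x²` for a
regular `x ∈ C`. -/

namespace Ideal

variable {R : Type*} [CommRing R] {I : Ideal R} {a : R}

theorem mem_nonZeroDivisors_of_sq_eq_span_mul (hIreg : ∃ x ∈ I, x ∈ nonZeroDivisors R)
    (hsq : I ^ 2 = span {a} * I) : a ∈ nonZeroDivisors R := by
  obtain ⟨x, hxI, hxreg⟩ := hIreg
  have hx_sq_mem : x * x ∈ span {a} := by
    have : x * x ∈ span {a} * I := by
      rw [← hsq, pow_two]
      exact mul_mem_mul hxI hxI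
    exact mul_le_left this
  obtain ⟨r, hr⟩ := mem_span_singleton.mp hx_sq_mem
  have : a * r ∈ nonZeroDivisors R := by
    rw [← hr]
    exact mul_mem hxreg hxreg
  exact (mul_mem_nonZeroDivisors.mp this).1

theorem le_span_singleton_of_isClosedIdeal (hI : IsClosedIdeal R I) (ha : a ∈ nonZeroDivisors R)
    (hsq : I ^ 2 ≤ span {a} * I) : I ≤ span {a} := by
  intro x hx
  refine hI x a ha (le_trans ?_ hsq)
  rw [pow_two]
  exact mul_mono_left (span_singleton_le_iff_mem I |>.mpr hx)

theorem eq_span_singleton_of_sq_eq_span_mul (hI : IsClosedIdeal R I)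
    (hIreg : ∃ x ∈ I, x ∈ nonZeroDivisors R) (haI : a ∈ I) (hsq : I ^ 2 = span {a} * I) :
    I = span {a} :=
  le_antisymm
    (le_span_singleton_of_isClosedIdeal hI (mem_nonZeroDivisors_of_sq_eq_span_mul hIreg hsq)
      hsq.le)
    ((span_singleton_le_iff_mem I).mpr haI)

end Ideal

theorem canonical_index_ne_one_general
    (R : Type*) [CommRing R]
    (C : Ideal R)
    (hCreg : ∃ x ∈ C, x ∈ nonZeroDivisors R)
    (hCclosed : IsClosedIdeal R C)
    (hnotGor : ¬ C.IsPrincipal) :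
    ¬ ∃ a ∈ C, C ^ 2 = Ideal.span {a} * C := by
  rintro ⟨a, haC, hsq⟩
  exact hnotGor ⟨a, Ideal.eq_span_singleton_of_sq_eq_span_mul hCclosed hCreg haC hsq⟩

/-- let `(R, m)` be a Cohen-Macaulay local ring which is not Gorenstein (its
canonical ideal is not principal) and whose canonical ideal `C` is equimultiple (it admits a
principal reduction).  Then the canonical index `ρ(R) = red(C)` is not `1`, i.e. there is no
`a ∈ C` with `C² = aC`.  The canonical ideal is encoded by its operative properties:
it contains a regular element and satisfies `Hom(C, C) = R`. -/
theorem canonical_index_ne_one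
    (R : Type*) [CommRing R] [IsLocalRing R] [IsNoetherianRing R]
    (hdim : 1 ≤ ringKrullDim R)
    (C : Ideal R)
    (hCreg : ∃ x ∈ C, x ∈ nonZeroDivisors R)
    (hCclosed : IsClosedIdeal R C)
    (hequi : ∃ a ∈ C, ∃ n : ℕ, C ^ (n + 1) = Ideal.span {a} * C ^ n)
    (hnotGor : ¬ C.IsPrincipal) :
    ¬ ∃ a ∈ C, C ^ 2 = Ideal.span {a} * C :=
  canonical_index_ne_one_general R C hCreg hCclosed hnotGor
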